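/- (Chvátal) Let (V₁,U,V₂) be a clique cutset separation of a graph G (U a clique, no edges between V₁ and V₂, both V₁ and V₂ nonempty), and set G₁ = G[V₁∪U], G₂ = G[V₂∪U]. Then STAB(G) = { x ∈ ℝ^{V} : x restricted to V₁∪U lies in STAB(G₁) and x restricted to V₂∪U lies in STAB(G₂) }. -/
import Mathlib


open Finset
open scoped Classical

variable {V : Type*} [Fintype V] [DecidableEq V]

/-- A stable (independent) set. -/
def IsStable {W : Type*} (G : SimpleGraph W) (S : Finset W) : Prop :=
  ∀ a ∈ S, ∀ b ∈ S, ¬ G.Adj a b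

/-- The stable set polytope. -/
noncomputable def stab {W : Type*} [Fintype W] (G : SimpleGraph W) : Set (W → ℝ) :=
  convexHull ℝ {x | ∃ S : Finset W, IsStable G S ∧
    x = fun w => if w ∈ S then (1 : ℝ) else 0}

/-- `x` restricted to `W₁` lies in the stable set polytope of `G[W₁]`. -/
noncomputable def MemStabOn (G : SimpleGraph V) (W₁ : Finset V) (x : V → ℝ) : Prop :=
  (fun w : {w // w ∈ W₁} => x w.1) ∈
    convexHull ℝ {z : {w // w ∈ W₁} → ℝ | ∃ S : Finset V, S ⊆ W₁ ∧ IsStable G S ∧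
      z = fun w => if w.1 ∈ S then (1 : ℝ) else 0}

set_option linter.unusedSectionVars false in
lemma card_inter_real (S U : Finset V) :
    ((S ∩ U).card : ℝ) = ∑ u ∈ U, (if u ∈ S then (1:ℝ) else 0) := by
  rw [Finset.sum_boole, Finset.filter_mem_eq_inter, Finset.inter_comm]

lemma marg_singleton {ι : Type} (t : Finset ι) (w : ι → ℝ) (S : ι → Finset V) (U : Finset V)
    (y : V → ℝ)
    (hcard : ∀ i ∈ t, (S i ∩ U).card ≤ 1)
    (hy : ∀ u ∈ U, y u = ∑ i ∈ t, w i * (if u ∈ S i then 1 else 0))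
    (u : V) (hu : u ∈ U) :
    (∑ i ∈ t, if S i ∩ U = {u} then w i else 0) = y u := by
  rw [hy u hu]
  refine Finset.sum_congr rfl fun i hi => ?_
  by_cases h : u ∈ S i
  · have hmem : u ∈ S i ∩ U := Finset.mem_inter.mpr ⟨h, hu⟩
    have : S i ∩ U = {u} := Finset.eq_singleton_iff_unique_mem.mpr
      ⟨hmem, fun b hb => Finset.card_le_one.mp (hcard i hi) b hb u hmem⟩
    simp [this, h]
  · have : S i ∩ U ≠ {u} := fun he =>
      h (Finset.mem_of_mem_inter_left (he ▸ Finset.mem_singleton_self u))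
    simp [this, h]

lemma marg_empty {ι : Type} (t : Finset ι) (w : ι → ℝ) (S : ι → Finset V) (U : Finset V)
    (y : V → ℝ) (hsum : ∑ i ∈ t, w i = 1)
    (hcard : ∀ i ∈ t, (S i ∩ U).card ≤ 1)
    (hy : ∀ u ∈ U, y u = ∑ i ∈ t, w i * (if u ∈ S i then 1 else 0)) :
    (∑ i ∈ t, if S i ∩ U = ∅ then w i else 0) = 1 - ∑ u ∈ U, y u := by
  have key : ∀ i ∈ t, (if S i ∩ U = ∅ then w i else 0)
      = w i - w i * ((S i ∩ U).card : ℝ) := by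
    intro i hi
    by_cases h : S i ∩ U = ∅
    · simp [h]
    · have h1 : (S i ∩ U).card = 1 :=
        le_antisymm (hcard i hi) (Finset.card_pos.mpr (Finset.nonempty_iff_ne_empty.mpr h))
      simp [h, h1]
  rw [Finset.sum_congr rfl key, Finset.sum_sub_distrib, hsum]
  congr 1
  have : ∀ i ∈ t, w i * ((S i ∩ U).card : ℝ)
      = ∑ u ∈ U, w i * (if u ∈ S i then 1 else 0) := by
    intro i hi
    rw [card_inter_real, Finset.mul_sum]
  rw [Finset.sum_congr rfl this, Finset.sum_comm]
  exact Finset.sum_congr rfl fun u hu => (hy u hu).symm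

lemma memStabOn_of_mem_stab (G : SimpleGraph V) (W₁ : Finset V) (x : V → ℝ)
    (hx : x ∈ stab G) : MemStabOn G W₁ x := by
  have h := Set.mem_image_of_mem (LinearMap.funLeft ℝ ℝ (Subtype.val : {w // w ∈ W₁} → V)) hx
  rw [stab, LinearMap.image_convexHull] at h
  refine convexHull_mono ?_ h
  rintro z ⟨y, ⟨S, hS, rfl⟩, rfl⟩
  refine ⟨S ∩ W₁, inter_subset_right,
    fun a ha b hb => hS a (mem_of_mem_inter_left ha) b (mem_of_mem_inter_left hb), ?_⟩
  funext w
  simp only [LinearMap.funLeft_apply, Function.comp_apply, mem_inter]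
  simp [w.2]

lemma memStabOn_iff (G : SimpleGraph V) (W₁ : Finset V) (x : V → ℝ) :
    MemStabOn G W₁ x ↔ ∃ (ι : Type) (t : Finset ι) (w : ι → ℝ) (S : ι → Finset V),
      (∀ i ∈ t, 0 ≤ w i) ∧ (∑ i ∈ t, w i) = 1 ∧
      (∀ i ∈ t, S i ⊆ W₁ ∧ IsStable G (S i)) ∧
      (∀ v ∈ W₁, x v = ∑ i ∈ t, w i * (if v ∈ S i then 1 else 0)) := by
  constructor
  · intro h
    rw [MemStabOn, _root_.convexHull_eq] at h
    obtain ⟨ι, t, w, z, hw0, hw1, hz, hc⟩ := h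
    choose! S hsub hst heq using hz
    refine ⟨ι, t, w, S, hw0, hw1, fun i hi => ⟨hsub i hi, hst i hi⟩, fun v hv => ?_⟩
    have := congrFun (t.centerMass_eq_of_sum_1 z hw1 ▸ hc) ⟨v, hv⟩
    rw [← this]
    rw [Finset.sum_apply]
    refine Finset.sum_congr rfl fun i hi => ?_
    rw [heq i hi]
    simp [smul_eq_mul]
  · rintro ⟨ι, t, w, S, hw0, hw1, hS, hx⟩
    rw [MemStabOn]
    have : (fun w : {w // w ∈ W₁} => x w.1) =
        t.centerMass w (fun i => fun p : {w // w ∈ W₁} => if p.1 ∈ S i then (1:ℝ) else 0) := by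
      rw [t.centerMass_eq_of_sum_1 _ hw1]
      funext p
      rw [Finset.sum_apply, hx p.1 p.2]
      exact Finset.sum_congr rfl fun i hi => by simp [smul_eq_mul]
    rw [this]
    exact t.centerMass_mem_convexHull hw0 (by rw [hw1]; norm_num)
      (fun i hi => ⟨S i, (hS i hi).1, (hS i hi).2, rfl⟩)

/-- Chvátal: for a clique cutset separation `(V₁, U, V₂)` of `G`,
`STAB(G)` consists exactly of the vectors whose restrictions to `G₁ = G[V₁ ∪ U]` and
`G₂ = G[V₂ ∪ U]` lie in `STAB(G₁)` and `STAB(G₂)`. -/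
theorem stmt13 (G : SimpleGraph V) (V₁ U V₂ : Finset V)
    (hpart : V₁ ∪ U ∪ V₂ = Finset.univ)
    (hd₁ : Disjoint V₁ U) (hd₂ : Disjoint V₁ V₂) (hd₃ : Disjoint U V₂)
    (hclique : ∀ a ∈ U, ∀ b ∈ U, a ≠ b → G.Adj a b)
    (hnonadj : ∀ a ∈ V₁, ∀ b ∈ V₂, ¬ G.Adj a b)
    (hV₁ : V₁.Nonempty) (hV₂ : V₂.Nonempty) :
    stab G = {x : V → ℝ | MemStabOn G (V₁ ∪ U) x ∧ MemStabOn G (V₂ ∪ U) x} := by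
  ext x
  simp only [Set.mem_setOf_eq]
  constructor
  · intro hx
    exact ⟨memStabOn_of_mem_stab _ _ _ hx, memStabOn_of_mem_stab _ _ _ hx⟩
  rintro ⟨h₁, h₂⟩
  rw [memStabOn_iff] at h₁ h₂
  obtain ⟨ι₁, t₁, w₁, S₁, hw₁0, hw₁1, hS₁, hx₁⟩ := h₁
  obtain ⟨ι₂, t₂, w₂, S₂, hw₂0, hw₂1, hS₂, hx₂⟩ := h₂
  -- intersections with the clique have at most one element
  have hcard : ∀ S : Finset V, IsStable G S → (S ∩ U).card ≤ 1 := by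
    intro S hS
    rw [Finset.card_le_one]
    intro a ha b hb
    by_contra hne
    exact hS a (Finset.mem_of_mem_inter_left ha) b (Finset.mem_of_mem_inter_left hb)
      (hclique a (Finset.mem_of_mem_inter_right ha) b (Finset.mem_of_mem_inter_right hb) hne)
  have hc₁ : ∀ i ∈ t₁, (S₁ i ∩ U).card ≤ 1 := fun i hi => hcard _ (hS₁ i hi).2
  have hc₂ : ∀ j ∈ t₂, (S₂ j ∩ U).card ≤ 1 := fun j hj => hcard _ (hS₂ j hj).2
  have hyU₁ : ∀ u ∈ U, x u = ∑ i ∈ t₁, w₁ i * (if u ∈ S₁ i then 1 else 0) :=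
    fun u hu => hx₁ u (Finset.mem_union_right _ hu)
  have hyU₂ : ∀ u ∈ U, x u = ∑ j ∈ t₂, w₂ j * (if u ∈ S₂ j then 1 else 0) :=
    fun u hu => hx₂ u (Finset.mem_union_right _ hu)
  set m₁ : Finset V → ℝ := fun c => ∑ i ∈ t₁, if S₁ i ∩ U = c then w₁ i else 0 with hm₁def
  set m₂ : Finset V → ℝ := fun c => ∑ j ∈ t₂, if S₂ j ∩ U = c then w₂ j else 0 with hm₂def
  -- possible forms of S ∩ U
  have hform : ∀ S : Finset V, (S ∩ U).card ≤ 1 → S ∩ U = ∅ ∨ ∃ u ∈ U, S ∩ U = {u} := by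
    intro S h
    interval_cases h' : (S ∩ U).card
    · exact Or.inl (Finset.card_eq_zero.mp h')
    · obtain ⟨u, hu⟩ := Finset.card_eq_one.mp h'
      exact Or.inr ⟨u, Finset.mem_of_mem_inter_right (hu ▸ Finset.mem_singleton_self u), hu⟩
  -- the marginals agree
  have hmarg : ∀ c : Finset V, (c = ∅ ∨ ∃ u ∈ U, c = {u}) → m₁ c = m₂ c := by
    rintro c (rfl | ⟨u, hu, rfl⟩)
    · rw [hm₁def, hm₂def]; beta_reduce
      rw [marg_empty t₁ w₁ S₁ U x hw₁1 hc₁ hyU₁, marg_empty t₂ w₂ S₂ U x hw₂1 hc₂ hyU₂]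
    · rw [hm₁def, hm₂def]; beta_reduce
      rw [marg_singleton t₁ w₁ S₁ U x hc₁ hyU₁ u hu, marg_singleton t₂ w₂ S₂ U x hc₂ hyU₂ u hu]
  -- combined weights
  set W : ι₁ × ι₂ → ℝ := fun p =>
    if S₁ p.1 ∩ U = S₂ p.2 ∩ U then w₁ p.1 * w₂ p.2 / m₂ (S₁ p.1 ∩ U) else 0 with hWdef
  have hm₂0 : ∀ c, 0 ≤ m₂ c := by
    intro c
    refine Finset.sum_nonneg fun j hj => ?_
    by_cases h : S₂ j ∩ U = c
    · simpa [h] using hw₂0 j hj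
    · simp [h]
  have hW0 : ∀ p ∈ t₁ ×ˢ t₂, 0 ≤ W p := by
    intro p hp
    rw [Finset.mem_product] at hp
    rw [hWdef]
    by_cases h : S₁ p.1 ∩ U = S₂ p.2 ∩ U
    · simp only [h, if_pos]
      exact div_nonneg (mul_nonneg (hw₁0 _ hp.1) (hw₂0 _ hp.2)) (hm₂0 _)
    · simp [h]
  -- column sums
  have hcol : ∀ i ∈ t₁, (∑ j ∈ t₂, W (i, j)) = w₁ i := by
    intro i hi
    have step : ∀ j ∈ t₂, W (i, j)
        = (w₁ i / m₂ (S₁ i ∩ U)) * (if S₂ j ∩ U = S₁ i ∩ U then w₂ j else 0) := by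
      intro j hj
      rw [hWdef]
      beta_reduce
      by_cases h : S₁ i ∩ U = S₂ j ∩ U
      · simp only [h, eq_self_iff_true, if_true]
        ring
      · rw [if_neg h, if_neg (fun he => h he.symm), mul_zero]
    rw [Finset.sum_congr rfl step, ← Finset.mul_sum]
    have : (∑ j ∈ t₂, if S₂ j ∩ U = S₁ i ∩ U then w₂ j else 0) = m₂ (S₁ i ∩ U) := by
      rw [hm₂def]
    rw [this]
    by_cases hm : m₂ (S₁ i ∩ U) = 0
    · have h1 : w₁ i ≤ m₁ (S₁ i ∩ U) := by
        rw [hm₁def]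
        have := Finset.single_le_sum (f := fun k => if S₁ k ∩ U = S₁ i ∩ U then w₁ k else 0)
          (fun k hk => by by_cases h : S₁ k ∩ U = S₁ i ∩ U <;> simp [h, hw₁0 k hk]) hi
        simpa using this
      have h2 : m₁ (S₁ i ∩ U) = 0 := by rw [hmarg _ (hform _ (hc₁ i hi)), hm]
      have h3 : w₁ i = 0 := le_antisymm (h2 ▸ h1) (hw₁0 i hi)
      rw [hm, h3]
      simp
    · rw [div_mul_cancel₀ _ hm]
  -- row sums
  have hrow : ∀ j ∈ t₂, (∑ i ∈ t₁, W (i, j)) = w₂ j := by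
    intro j hj
    have step : ∀ i ∈ t₁, W (i, j)
        = (w₂ j / m₂ (S₂ j ∩ U)) * (if S₁ i ∩ U = S₂ j ∩ U then w₁ i else 0) := by
      intro i hi
      rw [hWdef]
      beta_reduce
      by_cases h : S₁ i ∩ U = S₂ j ∩ U
      · simp only [h, eq_self_iff_true, if_true]
        ring
      · rw [if_neg h, if_neg h, mul_zero]
    rw [Finset.sum_congr rfl step, ← Finset.mul_sum]
    have : (∑ i ∈ t₁, if S₁ i ∩ U = S₂ j ∩ U then w₁ i else 0) = m₂ (S₂ j ∩ U) := by
      rw [show (∑ i ∈ t₁, if S₁ i ∩ U = S₂ j ∩ U then w₁ i else 0) = m₁ (S₂ j ∩ U) by rw [hm₁def]]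
      exact hmarg _ (by rw [show S₂ j ∩ U = S₂ j ∩ U from rfl]; exact hform _ (hc₂ j hj))
    rw [this]
    by_cases hm : m₂ (S₂ j ∩ U) = 0
    · have h1 : w₂ j ≤ m₂ (S₂ j ∩ U) := by
        rw [hm₂def]
        have := Finset.single_le_sum (f := fun k => if S₂ k ∩ U = S₂ j ∩ U then w₂ k else 0)
          (fun k hk => by by_cases h : S₂ k ∩ U = S₂ j ∩ U <;> simp [h, hw₂0 k hk]) hj
        simpa using this
      have h3 : w₂ j = 0 := le_antisymm (hm ▸ h1) (hw₂0 j hj)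
      rw [hm, h3]
      simp
    · rw [div_mul_cancel₀ _ hm]
  -- total mass
  have hWsum : (∑ p ∈ t₁ ×ˢ t₂, W p) = 1 := by
    rw [Finset.sum_product]
    rw [Finset.sum_congr rfl hcol]
    exact hw₁1
  -- off-diagonal weights vanish
  have hWoff : ∀ p : ι₁ × ι₂, S₁ p.1 ∩ U ≠ S₂ p.2 ∩ U → W p = 0 := by
    intro p h
    rw [hWdef]
    exact if_neg h
  set T : Finset (ι₁ × ι₂) := (t₁ ×ˢ t₂).filter (fun p => S₁ p.1 ∩ U = S₂ p.2 ∩ U) with hTdef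
  have hfilter : ∀ f : ι₁ × ι₂ → ℝ, (∀ p, S₁ p.1 ∩ U ≠ S₂ p.2 ∩ U → f p = 0) →
      (∑ p ∈ T, f p) = ∑ p ∈ t₁ ×ˢ t₂, f p := by
    intro f hf
    rw [hTdef, Finset.sum_filter]
    refine Finset.sum_congr rfl fun p hp => ?_
    by_cases h : S₁ p.1 ∩ U = S₂ p.2 ∩ U
    · simp [h]
    · simp [h, hf p h]
  have hTsum : (∑ p ∈ T, W p) = 1 := by rw [hfilter W hWoff]; exact hWsum
  -- stability of the glued sets
  have hstab : ∀ p ∈ T, IsStable G (S₁ p.1 ∪ S₂ p.2) := by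
    intro p hp
    rw [hTdef, Finset.mem_filter] at hp
    obtain ⟨hp', hPU⟩ := hp
    rw [Finset.mem_product] at hp'
    have hst₁ := (hS₁ p.1 hp'.1).2
    have hst₂ := (hS₂ p.2 hp'.2).2
    have hsub₁ := (hS₁ p.1 hp'.1).1
    have hsub₂ := (hS₂ p.2 hp'.2).1
    have key : ∀ a ∈ S₁ p.1, ∀ b ∈ S₂ p.2, ¬ G.Adj a b := by
      intro a ha b hb hadj
      by_cases haU : a ∈ U
      · have : a ∈ S₂ p.2 := Finset.mem_of_mem_inter_left
          (hPU ▸ Finset.mem_inter.mpr ⟨ha, haU⟩)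
        exact hst₂ a this b hb hadj
      by_cases hbU : b ∈ U
      · have : b ∈ S₁ p.1 := Finset.mem_of_mem_inter_left
          (hPU.symm ▸ Finset.mem_inter.mpr ⟨hb, hbU⟩)
        exact hst₁ a ha b this hadj
      · have haV₁ : a ∈ V₁ := (Finset.mem_union.mp (hsub₁ ha)).resolve_right haU
        have hbV₂ : b ∈ V₂ := (Finset.mem_union.mp (hsub₂ hb)).resolve_right hbU
        exact hnonadj a haV₁ b hbV₂ hadj
    intro a ha b hb hadj
    rcases Finset.mem_union.mp ha with ha' | ha' <;> rcases Finset.mem_union.mp hb with hb' | hb'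
    · exact hst₁ a ha' b hb' hadj
    · exact key a ha' b hb' hadj
    · exact key b hb' a ha' hadj.symm
    · exact hst₂ a ha' b hb' hadj
  -- the glued points
  set Z : ι₁ × ι₂ → (V → ℝ) := fun p => fun v => if v ∈ S₁ p.1 ∪ S₂ p.2 then (1:ℝ) else 0
    with hZdef
  have hW0T : ∀ p ∈ T, 0 ≤ W p := fun p hp => hW0 p (Finset.mem_filter.mp (hTdef ▸ hp)).1
  have hmem := T.centerMass_mem_convexHull (z := Z)
    (s := {y : V → ℝ | ∃ S : Finset V, IsStable G S ∧
      y = fun w => if w ∈ S then (1:ℝ) else 0})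
    hW0T (by rw [hTsum]; norm_num)
    (fun p hp => ⟨S₁ p.1 ∪ S₂ p.2, hstab p hp, rfl⟩)
  have hxeq : x = T.centerMass W Z := by
    rw [T.centerMass_eq_of_sum_1 _ hTsum]
    funext v
    rw [Finset.sum_apply]
    have hvuniv : v ∈ V₁ ∪ U ∪ V₂ := hpart ▸ Finset.mem_univ v
    have hterm : ∀ p : ι₁ × ι₂, (W p • Z p) v = W p * (if v ∈ S₁ p.1 ∪ S₂ p.2 then 1 else 0) := by
      intro p
      rw [hZdef]
      simp [smul_eq_mul]
    rcases Finset.mem_union.mp hvuniv with hv12 | hv2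
    · -- v ∈ V₁ ∪ U
      have step1 : ∀ p ∈ T, (W p • Z p) v = W p * (if v ∈ S₁ p.1 then 1 else 0) := by
        intro p hp
        rw [hterm p]
        rw [hTdef, Finset.mem_filter] at hp
        obtain ⟨hp', hPU⟩ := hp
        rw [Finset.mem_product] at hp'
        congr 1
        by_cases h1 : v ∈ S₁ p.1
        · simp [h1, Finset.mem_union]
        · have h2 : v ∉ S₂ p.2 := by
            intro h2
            rcases Finset.mem_union.mp ((hS₂ p.2 hp'.2).1 h2) with hvV₂ | hvU
            · rcases Finset.mem_union.mp hv12 with h | h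
              · exact (Finset.disjoint_left.mp hd₂ h) hvV₂
              · exact (Finset.disjoint_left.mp hd₃ h) hvV₂
            · exact h1 (Finset.mem_of_mem_inter_left
                (hPU.symm ▸ Finset.mem_inter.mpr ⟨h2, hvU⟩))
          simp [h1, h2, Finset.mem_union]
      rw [Finset.sum_congr rfl step1]
      have hoff : ∀ p : ι₁ × ι₂, S₁ p.1 ∩ U ≠ S₂ p.2 ∩ U →
          W p * (if v ∈ S₁ p.1 then 1 else 0) = 0 := by
        intro p h; rw [hWoff p h, zero_mul]
      rw [hfilter _ hoff, Finset.sum_product]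
      have : ∀ i ∈ t₁, (∑ j ∈ t₂, W (i, j) * (if v ∈ S₁ i then 1 else 0))
          = w₁ i * (if v ∈ S₁ i then 1 else 0) := by
        intro i hi
        rw [← Finset.sum_mul, hcol i hi]
      rw [Finset.sum_congr rfl this, ← hx₁ v hv12]
    · -- v ∈ V₂
      have hv2' : v ∈ V₂ ∪ U := Finset.mem_union_left _ hv2
      have step1 : ∀ p ∈ T, (W p • Z p) v = W p * (if v ∈ S₂ p.2 then 1 else 0) := by
        intro p hp
        rw [hterm p]
        rw [hTdef, Finset.mem_filter] at hp
        obtain ⟨hp', hPU⟩ := hp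
        rw [Finset.mem_product] at hp'
        congr 1
        by_cases h2 : v ∈ S₂ p.2
        · simp [h2, Finset.mem_union]
        · have h1 : v ∉ S₁ p.1 := by
            intro h1
            rcases Finset.mem_union.mp ((hS₁ p.1 hp'.1).1 h1) with hvV₁ | hvU
            · exact (Finset.disjoint_right.mp hd₂ hv2) hvV₁
            · exact (Finset.disjoint_right.mp hd₃ hv2) hvU
          simp [h1, h2, Finset.mem_union]
      rw [Finset.sum_congr rfl step1]
      have hoff : ∀ p : ι₁ × ι₂, S₁ p.1 ∩ U ≠ S₂ p.2 ∩ U →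
          W p * (if v ∈ S₂ p.2 then 1 else 0) = 0 := by
        intro p h; rw [hWoff p h, zero_mul]
      rw [hfilter _ hoff, Finset.sum_product_right]
      have : ∀ j ∈ t₂, (∑ i ∈ t₁, W (i, j) * (if v ∈ S₂ j then 1 else 0))
          = w₂ j * (if v ∈ S₂ j then 1 else 0) := by
        intro j hj
        rw [← Finset.sum_mul, hrow j hj]
      rw [Finset.sum_congr rfl this, ← hx₂ v hv2']
  have : x ∈ convexHull ℝ {y : V → ℝ | ∃ S : Finset V, IsStable G S ∧
      y = fun w => if w ∈ S then (1:ℝ) else 0} := by rw [hxeq]; exact hmem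
  unfold stab
  convert this using 2
  congr!
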